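/- For every ε > 0 there exists δ > 0 such that: if F is an r-uniform hypergraph, u ∈ V(F), μ is a probability distribution on V(F) with λ(F, μ) ≥ λ(F) − δ and μ(u) ≥ ε, then λ(F, μ, u) ≥ r·λ(F) − ε. In fact δ = (ε³ − ε⁴)/r works (for ε < 1). -/

import Mathlib

/-! Move mass `s = ε²` off `u` and rescale: `ν = (1 + s) • μ - s · 𝟙_u` is again a probability
distribution as soon as `μ u ≥ ε`, and since every edge through `u` loses the factor `μ u` while
every other vertex gains the factor `1 + s`,
`λ(F, ν) = (1 + s)^r λ(F, μ) - s (1 + s)^(r-1) λ(F, μ, u)`.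
Comparing with `λ(F, ν) ≤ λ(F) ≤ λ(F, μ) + δ` bounds the link density from below by `r λ(F)`,
up to the second-order term of `(1 + s)^r`, which is of size `s² r² (1 + s)^(r-1) λ(F)`;
the Maclaurin bound `λ(F) ≤ 1 / r!` makes it at most `ε⁴ (1 + s)^(r-1) / 2`. -/

open Finset

def IsProb {V : Type*} [Fintype V] (μ : V → ℝ) : Prop :=
  (∀ v, 0 ≤ μ v) ∧ ∑ v, μ v = 1

def hDen {V : Type*} (F : Finset (Finset V)) (μ : V → ℝ) : ℝ :=
  ∑ E ∈ F, ∏ v ∈ E, μ v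

def hLink {V : Type*} [DecidableEq V] (F : Finset (Finset V)) (v : V) : Finset (Finset V) :=
  (F.filter (fun E => v ∈ E)).image (fun E => E.erase v)

def linkDen {V : Type*} [DecidableEq V] (F : Finset (Finset V)) (μ : V → ℝ) (v : V) : ℝ :=
  ∑ I ∈ hLink F v, ∏ u ∈ I, μ u

/-- The Lagrangian of `F`: the supremum of densities over probability distributions. -/
noncomputable def lagrangian {V : Type*} [Fintype V] (F : Finset (Finset V)) : ℝ :=
  sSup {x : ℝ | ∃ μ : V → ℝ, IsProb μ ∧ x = hDen F μ}

lemma pow_succ_add_mul_le_add_pow {a b : ℝ} (ha : 0 ≤ a) (hb : 0 ≤ b) (n : ℕ) :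
    b ^ (n + 1) + (n + 1) * a * b ^ n ≤ (a + b) ^ (n + 1) := by
  induction n with
  | zero => simp [add_comm]
  | succ n ih =>
    calc b ^ (n + 1 + 1) + ((n + 1 : ℕ) + 1 : ℝ) * a * b ^ (n + 1)
        = (a + b) * (b ^ (n + 1) + (n + 1) * a * b ^ n) - (n + 1) * a ^ 2 * b ^ n := by
          push_cast; ring
      _ ≤ (a + b) * (b ^ (n + 1) + (n + 1) * a * b ^ n) := sub_le_self _ (by positivity)
      _ ≤ (a + b) * (a + b) ^ (n + 1) := by gcongr
      _ = (a + b) ^ (n + 1 + 1) := by ring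

lemma two_mul_succ_mul_pow_sub_le {s : ℝ} (hs : 0 ≤ s) (m : ℕ) :
    2 * ((m + 1) * s * (1 + s) ^ m - ((1 + s) ^ (m + 1) - 1))
      ≤ s ^ 2 * (1 + s) ^ m * ((m + 1) * m) := by
  induction m with
  | zero => simp
  | succ k ih =>
    have hmvt : (1 + s) ^ (k + 1) - 1 ≤ (k + 1) * s * (1 + s) ^ k := by
      have h := (le_abs_self _).trans (abs_pow_sub_pow_le (1 + s) 1 (k + 1))
      rw [one_pow, add_sub_cancel_left, abs_of_nonneg hs, Nat.add_sub_cancel, abs_of_nonneg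
        (by linarith), abs_one, max_eq_left (by linarith), Nat.cast_succ] at h
      linarith
    have hsplit : 2 * (((k + 1 : ℕ) + 1) * s * (1 + s) ^ (k + 1) - ((1 + s) ^ (k + 1 + 1) - 1))
        = (1 + s) * (2 * ((k + 1) * s * (1 + s) ^ k - ((1 + s) ^ (k + 1) - 1)))
          + 2 * s * ((1 + s) ^ (k + 1) - 1) := by
      push_cast; ring
    rw [hsplit]
    calc (1 + s) * (2 * ((k + 1) * s * (1 + s) ^ k - ((1 + s) ^ (k + 1) - 1)))
          + 2 * s * ((1 + s) ^ (k + 1) - 1)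
        ≤ (1 + s) * (s ^ 2 * (1 + s) ^ k * ((k + 1) * k))
            + 2 * s * ((k + 1) * s * (1 + s) ^ k) := by
          gcongr
      _ ≤ (1 + s) * (s ^ 2 * (1 + s) ^ k * ((k + 1) * k)) + 2 * s * ((k + 1) * s * (1 + s) ^ k)
            + 2 * s ^ 3 * (1 + s) ^ k * (k + 1) := le_add_of_nonneg_right (by positivity)
      _ = s ^ 2 * (1 + s) ^ (k + 1) * (((k + 1 : ℕ) + 1) * (k + 1 : ℕ)) := by push_cast; ring

section Hypergraph

variable {V : Type*}

lemma sum_powersetCard_succ_insert_prod [DecidableEq V] (μ : V → ℝ) {a : V} {t : Finset V}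
    (ha : a ∉ t) (m : ℕ) :
    ∑ E ∈ (insert a t).powersetCard (m + 1), ∏ v ∈ E, μ v
      = ∑ E ∈ t.powersetCard (m + 1), ∏ v ∈ E, μ v
        + μ a * ∑ E ∈ t.powersetCard m, ∏ v ∈ E, μ v := by
  have hnot : ∀ E ∈ t.powersetCard m, a ∉ E := fun E hE h => ha ((mem_powersetCard.1 hE).1 h)
  rw [powersetCard_succ_insert ha, sum_union, sum_image, mul_sum]
  · exact congrArg _ (sum_congr rfl fun E hE => prod_insert (hnot E hE))
  · intro E₁ h₁ E₂ h₂ h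
    rw [← erase_insert (hnot E₁ h₁), h, erase_insert (hnot E₂ h₂)]
  · refine disjoint_left.2 fun E hE hE' => ?_
    obtain ⟨E', -, rfl⟩ := mem_image.1 hE'
    exact ha ((mem_powersetCard.1 hE).1 (mem_insert_self a E'))

theorem factorial_mul_sum_powersetCard_prod_le {μ : V → ℝ} (hμ : ∀ v, 0 ≤ μ v)
    (t : Finset V) (r : ℕ) :
    (r.factorial : ℝ) * ∑ E ∈ t.powersetCard r, ∏ v ∈ E, μ v ≤ (∑ v ∈ t, μ v) ^ r := by
  classical
  induction t using Finset.induction generalizing r with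
  | empty =>
    cases r with
    | zero => simp
    | succ m => rw [powersetCard_eq_empty.2 (Nat.succ_pos m)]; simp
  | @insert a t ha ih =>
    cases r with
    | zero => simp
    | succ m =>
      rw [sum_powersetCard_succ_insert_prod μ ha, sum_insert ha]
      calc ((m + 1).factorial : ℝ) * (∑ E ∈ t.powersetCard (m + 1), ∏ v ∈ E, μ v
              + μ a * ∑ E ∈ t.powersetCard m, ∏ v ∈ E, μ v)
          = (m + 1).factorial * ∑ E ∈ t.powersetCard (m + 1), ∏ v ∈ E, μ v
              + (m + 1) * μ a * (m.factorial * ∑ E ∈ t.powersetCard m, ∏ v ∈ E, μ v) := by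
            rw [Nat.factorial_succ]; push_cast; ring
        _ ≤ (∑ v ∈ t, μ v) ^ (m + 1) + (m + 1) * μ a * (∑ v ∈ t, μ v) ^ m :=
            add_le_add (ih (m + 1)) (mul_le_mul_of_nonneg_left (ih m)
              (mul_nonneg (by positivity) (hμ a)))
        _ ≤ (μ a + ∑ v ∈ t, μ v) ^ (m + 1) :=
            pow_succ_add_mul_le_add_pow (hμ a) (sum_nonneg fun v _ => hμ v) m

lemma hDen_nonneg (F : Finset (Finset V)) {μ : V → ℝ} (hμ : ∀ v, 0 ≤ μ v) : 0 ≤ hDen F μ :=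
  sum_nonneg fun _ _ => prod_nonneg fun v _ => hμ v

lemma hDen_congr {F : Finset (Finset V)} {μ ν : V → ℝ} (h : ∀ E ∈ F, ∀ v ∈ E, μ v = ν v) :
    hDen F μ = hDen F ν :=
  sum_congr rfl fun E hE => prod_congr rfl (h E hE)

lemma hDen_smul {F : Finset (Finset V)} {k : ℕ} (hF : ∀ E ∈ F, E.card = k) (c : ℝ) (μ : V → ℝ) :
    hDen F (c • μ) = c ^ k * hDen F μ := by
  simp only [hDen, mul_sum, Pi.smul_apply, smul_eq_mul, prod_mul_distrib, prod_const]
  exact sum_congr rfl fun E hE => by rw [hF E hE]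

lemma hDen_eq_mul_linkDen_add [DecidableEq V] (F : Finset (Finset V)) (μ : V → ℝ) (u : V) :
    hDen F μ = μ u * linkDen F μ u + hDen (F.filter (u ∉ ·)) μ := by
  have hlink : linkDen F μ u = ∑ E ∈ F.filter (u ∈ ·), ∏ v ∈ E.erase u, μ v := by
    refine sum_image fun E₁ h₁ E₂ h₂ h => ?_
    rw [← insert_erase (mem_filter.1 h₁).2, ← insert_erase (mem_filter.1 h₂).2]
    exact congrArg _ h
  rw [hlink, mul_sum, hDen, hDen, ← sum_filter_add_sum_filter_not F (u ∈ ·)]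
  exact congrArg (· + _) (sum_congr rfl fun E hE => (mul_prod_erase E μ (mem_filter.1 hE).2).symm)

lemma card_of_mem_hLink [DecidableEq V] {F : Finset (Finset V)} {m : ℕ}
    (hF : ∀ E ∈ F, E.card = m + 1) {u : V} {I : Finset V} (hI : I ∈ hLink F u) :
    I.card = m ∧ u ∉ I := by
  obtain ⟨E, hE, rfl⟩ := mem_image.1 hI
  obtain ⟨hEF, huE⟩ := mem_filter.1 hE
  exact ⟨by rw [card_erase_of_mem huE, hF E hEF, Nat.add_sub_cancel], notMem_erase u E⟩

lemma hDen_smul_sub_single [DecidableEq V] {F : Finset (Finset V)} {m : ℕ}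
    (hF : ∀ E ∈ F, E.card = m + 1) (μ : V → ℝ) (u : V) (c t : ℝ) :
    hDen F (c • μ - Pi.single u t) = c ^ (m + 1) * hDen F μ - t * c ^ m * linkDen F μ u := by
  have hoff : ∀ v ≠ u, (c • μ - Pi.single u t : V → ℝ) v = (c • μ) v := fun v hv => by simp [hv]
  have hlink : linkDen F (c • μ - Pi.single u t) u = c ^ m * linkDen F μ u := by
    rw [linkDen, ← hDen, hDen_congr fun I hI v hv => hoff v ?_,
      hDen_smul fun I hI => (card_of_mem_hLink hF hI).1]
    · rfl
    · rintro rfl; exact (card_of_mem_hLink hF hI).2 hv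
  have hrest : hDen (F.filter (u ∉ ·)) (c • μ - Pi.single u t)
      = c ^ (m + 1) * hDen (F.filter (u ∉ ·)) μ := by
    rw [hDen_congr fun E hE v hv => hoff v ?_, hDen_smul fun E hE => hF E (mem_filter.1 hE).1]
    rintro rfl; exact (mem_filter.1 hE).2 hv
  rw [hDen_eq_mul_linkDen_add F _ u, hlink, hrest, hDen_eq_mul_linkDen_add F μ u]
  simp only [Pi.sub_apply, Pi.smul_apply, smul_eq_mul, Pi.single_eq_same]
  ring

section Lagrangian

variable [Fintype V]

lemma IsProb.le_one {μ : V → ℝ} (hμ : IsProb μ) (v : V) : μ v ≤ 1 :=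
  hμ.2 ▸ single_le_sum (fun w _ => hμ.1 w) (mem_univ v)

lemma isProb_smul_sub_single [DecidableEq V] {μ : V → ℝ} (hμ : IsProb μ) {s : ℝ} {u : V}
    (hs : 0 ≤ s) (hu : s ≤ (1 + s) * μ u) : IsProb ((1 + s) • μ - Pi.single u s) := by
  refine ⟨fun v => ?_, ?_⟩
  · by_cases hv : v = u
    · subst hv; simpa using hu
    · simpa [hv] using mul_nonneg (by linarith) (hμ.1 v)
  · simp [sum_sub_distrib, ← mul_sum, hμ.2]

lemma hDen_le_card {F : Finset (Finset V)} {μ : V → ℝ} (hμ : IsProb μ) : hDen F μ ≤ F.card := by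
  calc hDen F μ ≤ ∑ _E ∈ F, (1 : ℝ) :=
        sum_le_sum fun E _ => prod_le_one (fun v _ => hμ.1 v) fun v _ => hμ.le_one v
    _ = F.card := by simp

lemma hDen_le_lagrangian (F : Finset (Finset V)) {μ : V → ℝ} (hμ : IsProb μ) :
    hDen F μ ≤ lagrangian F :=
  le_csSup ⟨F.card, by rintro _ ⟨ν, hν, rfl⟩; exact hDen_le_card hν⟩ ⟨μ, hμ, rfl⟩

lemma lagrangian_nonneg (F : Finset (Finset V)) : 0 ≤ lagrangian F :=
  Real.sSup_nonneg fun _ ⟨_, hμ, hx⟩ => hx ▸ hDen_nonneg F hμ.1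

lemma hDen_le_inv_factorial {F : Finset (Finset V)} {r : ℕ}
    (hF : ∀ E ∈ F, E.card = r) {μ : V → ℝ} (hμ : IsProb μ) : hDen F μ ≤ (r.factorial : ℝ)⁻¹ := by
  have hsub : F ⊆ univ.powersetCard r := fun E hE => mem_powersetCard.2 ⟨subset_univ E, hF E hE⟩
  have hmac := factorial_mul_sum_powersetCard_prod_le hμ.1 univ r
  rw [hμ.2, one_pow] at hmac
  rw [inv_eq_one_div, le_div_iff₀ (by positivity)]
  calc hDen F μ * r.factorial ≤ r.factorial * ∑ E ∈ univ.powersetCard r, ∏ v ∈ E, μ v := by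
        rw [mul_comm]
        gcongr
        exact sum_le_sum_of_subset_of_nonneg hsub fun E _ _ => prod_nonneg fun v _ => hμ.1 v
    _ ≤ 1 := hmac

lemma lagrangian_le_inv_factorial {F : Finset (Finset V)} {r : ℕ}
    (hF : ∀ E ∈ F, E.card = r) : lagrangian F ≤ (r.factorial : ℝ)⁻¹ :=
  Real.sSup_le (fun _ ⟨_, hμ, hx⟩ => hx ▸ hDen_le_inv_factorial hF hμ) (by positivity)

lemma lagrangian_mul_sub_le {F : Finset (Finset V)} {m : ℕ} (hF : ∀ E ∈ F, E.card = m + 1)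
    {s : ℝ} (hs : 0 ≤ s) :
    lagrangian F * ((m + 1) * s * (1 + s) ^ m - ((1 + s) ^ (m + 1) - 1))
      ≤ s ^ 2 * (1 + s) ^ m / 2 := by
  have hfact : ((m + 1) * m : ℝ) ≤ (m + 1).factorial := by
    exact_mod_cast Nat.factorial_succ m ▸ Nat.mul_le_mul_left _ (Nat.self_le_factorial m)
  have hrem := two_mul_succ_mul_pow_sub_le hs m
  calc lagrangian F * ((m + 1) * s * (1 + s) ^ m - ((1 + s) ^ (m + 1) - 1))
      ≤ lagrangian F * (s ^ 2 * (1 + s) ^ m * ((m + 1) * m) / 2) := by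
        gcongr
        · exact lagrangian_nonneg F
        · linarith
    _ ≤ ((m + 1).factorial : ℝ)⁻¹ * (s ^ 2 * (1 + s) ^ m * (m + 1).factorial / 2) := by
        gcongr
        exact lagrangian_le_inv_factorial hF
    _ = s ^ 2 * (1 + s) ^ m / 2 := by field_simp

end Lagrangian

end Hypergraph

/-- For every `ε ∈ (0,1)` the choice `δ = (ε³ − ε⁴)/r` works: if `F` is an `r`-uniform
hypergraph, `μ` a probability distribution with `λ(F,μ) ≥ λ(F) − δ` and `μ(u) ≥ ε`,
then `λ(F,μ,u) ≥ r·λ(F) − ε`. -/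
theorem link_density_large {V : Type*} [Fintype V] [DecidableEq V] (r : ℕ) (hr : 0 < r)
    (ε : ℝ) (hε : 0 < ε) (hε1 : ε < 1) :
    ∃ δ : ℝ, 0 < δ ∧ δ = (ε ^ 3 - ε ^ 4) / r ∧
      ∀ (F : Finset (Finset V)) (u : V) (μ : V → ℝ),
        (∀ E ∈ F, E.card = r) → IsProb μ →
        lagrangian F - δ ≤ hDen F μ → ε ≤ μ u →
        (r : ℝ) * lagrangian F - ε ≤ linkDen F μ u := by
  obtain ⟨m, rfl⟩ : ∃ m, r = m + 1 := ⟨r - 1, by omega⟩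
  have hε34 : 0 < ε ^ 3 - ε ^ 4 := by nlinarith [pow_pos hε 3]
  refine ⟨_, div_pos hε34 (by positivity), rfl, fun F u μ hF hμ hclose hμu => ?_⟩
  have hδ : (ε ^ 3 - ε ^ 4) / ((m + 1 : ℕ) : ℝ) ≤ ε ^ 3 - ε ^ 4 :=
    div_le_self hε34.le (by exact_mod_cast Nat.le_add_left 1 m)
  have hν := hDen_le_lagrangian F (isProb_smul_sub_single hμ (sq_nonneg ε) (u := u)
    (by nlinarith [mul_le_mul_of_nonneg_left hμu (by positivity : (0 : ℝ) ≤ 1 + ε ^ 2)]))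
  rw [hDen_smul_sub_single hF, pow_succ (1 + ε ^ 2) m] at hν
  have hrem := lagrangian_mul_sub_le hF (sq_nonneg ε)
  rw [pow_succ (1 + ε ^ 2) m] at hrem
  have hP : 1 ≤ (1 + ε ^ 2) ^ m := one_le_pow₀ (by nlinarith)
  set P := (1 + ε ^ 2) ^ m
  set δ := (ε ^ 3 - ε ^ 4) / ((m + 1 : ℕ) : ℝ)
  have key : ε ^ 2 * P * ((m + 1 : ℕ) * lagrangian F - ε) ≤ ε ^ 2 * P * linkDen F μ u :=
    calc ε ^ 2 * P * ((m + 1 : ℕ) * lagrangian F - ε)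
        ≤ P * (1 + ε ^ 2) * (lagrangian F - δ) - lagrangian F := by
          push_cast
          -- `ε⁴ / 2 + (1 + ε²) (ε³ - ε⁴) ≤ ε³` since `ε - ε² ≤ 1 / 4`
          nlinarith [mul_le_mul_of_nonneg_left hδ (by positivity : 0 ≤ P * (1 + ε ^ 2)),
            mul_nonneg (mul_nonneg (pow_nonneg hε.le 4) (sq_nonneg (ε - 1 / 2)))
              (by positivity : 0 ≤ P)]
      _ ≤ P * (1 + ε ^ 2) * hDen F μ - lagrangian F := by gcongr
      _ ≤ ε ^ 2 * P * linkDen F μ u := by linarith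
  exact le_of_mul_le_mul_left key (by positivity)
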